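/- arXiv:2108.12986 — 8 statements merged into one kernel-verified Lean document; each statement's English description precedes it below -/
import Mathlib

section
/- Let X be a one-sided shift space over a finite alphabet A. If X is a shift of finite type, then the hom tree-shift T_X is a tree-shift of finite type. -/
namespace TreeShiftPaper

/-- Words over the alphabet `Σ = {0, …, k-1}`: nodes of the `k`-tree. -/
abbrev Word (k : ℕ) := List (Fin k)

variable {k : ℕ} {A : Type*}

/-- A set of words is prefix-closed if it contains every prefix of each of its elements. -/
def PrefixClosed (S : Set (Word k)) : Prop :=
  ∀ w ∈ S, ∀ v : Word k, v <+: w → v ∈ S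

/-- The pattern with support `S` and labels `u` appears in the labeled tree `t`. -/
def PatternAppears (t : Word k → A) (S : Set (Word k)) (u : Word k → A) : Prop :=
  ∃ s : Word k, ∀ w ∈ S, t (s ++ w) = u w

/-- The set of labeled trees avoiding every pattern of the forbidden family `F`. -/
def treeShiftOf (F : Set ((Set (Word k)) × (Word k → A))) : Set (Word k → A) :=
  {t | ∀ p ∈ F, ¬ PatternAppears t p.1 p.2}

/-- `T` is a tree-shift: it is defined by some forbidden set of patterns
(each with finite prefix-closed support). -/
def IsTreeShift (T : Set (Word k → A)) : Prop :=
  ∃ F : Set ((Set (Word k)) × (Word k → A)),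
    (∀ p ∈ F, p.1.Finite ∧ PrefixClosed p.1) ∧ T = treeShiftOf F

/-- `T` is a tree-shift of finite type: the forbidden set can be chosen finite. -/
def IsTreeSFT (T : Set (Word k → A)) : Prop :=
  ∃ F : Set ((Set (Word k)) × (Word k → A)),
    F.Finite ∧ (∀ p ∈ F, p.1.Finite ∧ PrefixClosed p.1) ∧ T = treeShiftOf F

/-- The finite word `w` occurs in the one-sided sequence `x` at position `i`. -/
def OccursAt (x : ℕ → A) (i : ℕ) (w : List A) : Prop :=
  ∀ j : Fin w.length, x (i + (j : ℕ)) = w.get j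

/-- The one-sided shift space defined by the forbidden set of words `F`. -/
def shiftOf (F : Set (List A)) : Set (ℕ → A) :=
  {x | ∀ w ∈ F, ∀ i : ℕ, ¬ OccursAt x i w}

/-- `X` is a one-sided shift space. -/
def IsShift (X : Set (ℕ → A)) : Prop := ∃ F : Set (List A), X = shiftOf F

/-- `X` is a one-sided shift of finite type. -/
def IsSFT (X : Set (ℕ → A)) : Prop :=
  ∃ F : Set (List A), F.Finite ∧ X = shiftOf F

/-- A chain: an infinite path in the tree starting at the root. -/
def IsChain (c : ℕ → Word k) : Prop :=
  c 0 = [] ∧ ∀ n : ℕ, ∃ i : Fin k, c (n + 1) = c n ++ [i]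

/-- The hom tree-shift associated with a one-sided shift space `X`: labeled trees whose
projection along every chain lies in `X`. -/
def homTree (k : ℕ) (X : Set (ℕ → A)) : Set (Word k → A) :=
  {t | ∀ c : ℕ → Word k, IsChain c → (fun n => t (c n)) ∈ X}

/-- `Y` is a sofic one-sided shift: image of an SFT under a sliding block code induced
by an `n`-block map. -/
def IsSofic (Y : Set (ℕ → A)) : Prop :=
  ∃ (B : Type) (_ : Fintype B) (X : Set (ℕ → B)) (n : ℕ) (f : (ℕ → B) → A),
    IsSFT X ∧ (∀ u v : ℕ → B, (∀ j < n, u j = v j) → f u = f v) ∧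
    (fun x : ℕ → B => fun i => f (fun j => x (i + j))) '' X = Y

/-- `T` is a sofic tree-shift: image of a tree-SFT under the map induced by an
`n`-block map. -/
def IsSoficTree (T : Set (Word k → A)) : Prop :=
  ∃ (B : Type) (_ : Fintype B) (T' : Set (Word k → B)) (n : ℕ) (g : (Word k → B) → A),
    IsTreeSFT T' ∧
    (∀ u v : Word k → B, (∀ w : Word k, w.length ≤ n → u w = v w) → g u = g v) ∧
    (fun t : Word k → B => fun w => g (fun z => t (w ++ z))) '' T' = T

/-- The Markov tree-shift determined by `k` binary `d × d` transition matrices. -/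
def markovTree (k d : ℕ) (M : Fin k → Matrix (Fin d) (Fin d) Bool) :
    Set (Word k → Fin d) :=
  {t | ∀ w : Word k, ∀ i : Fin k, M i (t w) (t (w ++ [i])) = true}

/-- The one-sided Markov (vertex) shift determined by a binary `d × d` matrix. -/
def markovShift (d : ℕ) (M : Matrix (Fin d) (Fin d) Bool) : Set (ℕ → Fin d) :=
  {x | ∀ i : ℕ, M (x i) (x (i + 1)) = true}

/-- The pattern with support `S` and labels `u` is admissible in `T`. -/
def AdmissiblePattern (T : Set (Word k → A)) (S : Set (Word k)) (u : Word k → A) : Prop :=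
  ∃ t ∈ T, ∃ s : Word k, ∀ w ∈ S, t (s ++ w) = u w

/-- The `n`-block `u` (a labeling of `Δ_n`) is admissible in `T`. -/
def AdmissibleBlock (T : Set (Word k → A)) (n : ℕ) (u : Word k → A) : Prop :=
  ∃ t ∈ T, ∃ s : Word k, ∀ w : Word k, w.length ≤ n → t (s ++ w) = u w

/-- Word distance on the `k`-tree:
`d(x,y) = |x| + |y| - 2 · max{|w| : w` a common prefix of `x` and `y}`. -/
noncomputable def wordDist (x y : Word k) : ℕ :=
  x.length + y.length - 2 * sSup {m : ℕ | ∃ w : Word k, w <+: x ∧ w <+: y ∧ w.length = m}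

/-- The boundary `∂S = {w ∈ S : wΣ ∩ S = ∅}` of a support `S`. -/
def boundary (S : Set (Word k)) : Set (Word k) :=
  {w | w ∈ S ∧ ∀ i : Fin k, w ++ [i] ∉ S}

/-- A complete prefix code: a finite prefix set such that every word of length at least
`max_{z ∈ P} |z|` has a prefix in `P`. -/
def IsCPC (P : Set (Word k)) : Prop :=
  P.Finite ∧ (∀ x ∈ P, ∀ y ∈ P, x <+: y → x = y) ∧
  ∀ w : Word k, (∀ z ∈ P, z.length ≤ w.length) → ∃ x ∈ P, x <+: w

/-- Strong irreducibility with gap `N`. -/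
def SIGap (T : Set (Word k → A)) (N : ℕ) : Prop :=
  ∀ (Su Sv : Set (Word k)) (u v : Word k → A),
    Su.Finite → PrefixClosed Su → Sv.Finite → PrefixClosed Sv →
    AdmissiblePattern T Su u → AdmissiblePattern T Sv v →
    ∀ w : Word k, (∀ h ∈ Su, N ≤ wordDist w h) →
      ∃ t ∈ T, (∀ z ∈ Su, t z = u z) ∧ ∀ z ∈ Sv, t (w ++ z) = v z

/-- `T` is strongly irreducible (SI). -/
def SI (T : Set (Word k → A)) : Prop := ∃ N : ℕ, SIGap T N

/-- `T` is block gluing (BG). -/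
def BG (T : Set (Word k → A)) : Prop :=
  ∃ N : ℕ, ∀ (n m : ℕ) (u v : Word k → A),
    AdmissibleBlock T n u → AdmissibleBlock T m v →
    ∀ w : Word k, N + n ≤ w.length →
      ∃ t ∈ T, (∀ z : Word k, z.length ≤ n → t z = u z) ∧
        ∀ z : Word k, z.length ≤ m → t (w ++ z) = v z

/-- `T` is topologically mixing (TM). -/
def TM (T : Set (Word k → A)) : Prop :=
  ∀ H₁ H₂ : Set (Word k), H₁.Finite → H₂.Finite →
    ∃ N : ℕ, ∀ t₁ ∈ T, ∀ t₂ ∈ T, ∀ w : Word k, (∀ h ∈ H₁, N ≤ wordDist w h) →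
      ∃ t ∈ T, (∀ z ∈ H₁, t z = t₁ z) ∧ ∀ z ∈ H₂, t (w ++ z) = t₂ z

/-- `T` is irreducible (IR). -/
def IR (T : Set (Word k → A)) : Prop :=
  ∀ (n m : ℕ) (u v : Word k → A),
    AdmissibleBlock T n u → AdmissibleBlock T m v →
    ∃ w : Word k, n < w.length ∧
      ∃ t ∈ T, (∀ z : Word k, z.length ≤ n → t z = u z) ∧
        ∀ z : Word k, z.length ≤ m → t (w ++ z) = v z

/-- `T` is CPC-strongly irreducible via the prefix set `P`. -/
def CPCSIWith (T : Set (Word k → A)) (P : Set (Word k)) : Prop :=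
  ∀ (Su Sv : Set (Word k)) (u v : Word k → A),
    Su.Finite → PrefixClosed Su → Sv.Finite → PrefixClosed Sv →
    AdmissiblePattern T Su u → AdmissiblePattern T Sv v →
    ∃ t ∈ T, (∀ z ∈ Su, t z = u z) ∧
      ∀ w ∈ boundary Su, ∀ z ∈ P, ∀ y ∈ Sv, t (w ++ z ++ y) = v y

/-- `T` is CPC-strongly irreducible (CPC SI). -/
def CPCSI (T : Set (Word k → A)) : Prop := ∃ P : Set (Word k), IsCPC P ∧ CPCSIWith T P

/-- `T` is uniform CPC-strongly irreducible (CPC USI): CPC SI with `P = Σ^N`. -/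
def CPCUSI (T : Set (Word k → A)) : Prop :=
  ∃ N : ℕ, CPCSIWith T {z : Word k | z.length = N}

/-- `T` is CPC-block gluing via the prefix set `P`. -/
def CPCBGWith (T : Set (Word k → A)) (P : Set (Word k)) : Prop :=
  ∀ (n m : ℕ) (u v : Word k → A),
    AdmissibleBlock T n u → AdmissibleBlock T m v →
    ∃ t ∈ T, (∀ z : Word k, z.length ≤ n → t z = u z) ∧
      ∀ w : Word k, w.length = n → ∀ z ∈ P, ∀ y : Word k, y.length ≤ m →
        t (w ++ z ++ y) = v y

/-- `T` is CPC-block gluing (CPC BG). -/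
def CPCBG (T : Set (Word k → A)) : Prop := ∃ P : Set (Word k), IsCPC P ∧ CPCBGWith T P

/-- `T` is uniform CPC-block gluing (CPC UBG): CPC BG with `P = Σ^N`. -/
def CPCUBG (T : Set (Word k → A)) : Prop :=
  ∃ N : ℕ, CPCBGWith T {z : Word k | z.length = N}

/-- `T` is CPC-irreducible (CPC IR). -/
def CPCIR (T : Set (Word k → A)) : Prop :=
  ∀ (n m : ℕ) (u v : Word k → A),
    AdmissibleBlock T n u → AdmissibleBlock T m v →
    ∃ P : Set (Word k), IsCPC P ∧ (∀ z ∈ P, n + 1 ≤ z.length) ∧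
      ∃ t ∈ T, (∀ z : Word k, z.length ≤ n → t z = u z) ∧
        ∀ w ∈ P, ∀ y : Word k, y.length ≤ m → t (w ++ y) = v y

/-- The finite word `u` is admissible in the one-sided shift space `X`. -/
def WordAdmissible (X : Set (ℕ → A)) (u : List A) : Prop :=
  ∃ x ∈ X, ∃ i : ℕ, OccursAt x i u

/-- The one-sided shift space `X` is topologically mixing. -/
def MixingShift (X : Set (ℕ → A)) : Prop :=
  ∀ u v : List A, WordAdmissible X u → WordAdmissible X v →
    ∃ N : ℕ, ∀ n ≥ N, ∃ x ∈ X, OccursAt x 0 u ∧ OccursAt x (u.length + n) v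

/-- The one-sided shift space `X` is transitive (irreducible). -/
def TransitiveShift (X : Set (ℕ → A)) : Prop :=
  ∀ u v : List A, WordAdmissible X u → WordAdmissible X v →
    ∃ x ∈ X, ∃ n : ℕ, u.length ≤ n ∧ OccursAt x 0 u ∧ OccursAt x n v

end TreeShiftPaper

namespace TreeShiftPaper

/-- Chains have `(c n).length = n`. -/
lemma chain_length {k : ℕ} {c : ℕ → Word k} (hc : IsChain c) : ∀ n, (c n).length = n := by
  intro n
  induction n with
  | zero => simp [hc.1]
  | succ n ih => obtain ⟨i, hi⟩ := hc.2 n; simp [hi, ih]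

/-- Chains are increasing for the prefix order. -/
lemma chain_prefix {k : ℕ} {c : ℕ → Word k} (hc : IsChain c) :
    ∀ {m n}, m ≤ n → c m <+: c n := by
  intro m n h
  induction h with
  | refl => exact List.prefix_refl _
  | @step n' h ih =>
    obtain ⟨i, hi⟩ := hc.2 n'
    rw [hi]
    exact ih.trans (List.prefix_append _ _)

/-- If a one-sided shift space `X` over a finite alphabet is an SFT, then the hom
tree-shift `T_X` is a tree-shift of finite type. -/
theorem stmt0 {k : ℕ} (hk : 2 ≤ k) {A : Type*} [Fintype A] (X : Set (ℕ → A))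
    (hX : IsSFT X) : IsTreeSFT (homTree k X) := by
  obtain ⟨F, hFfin, rfl⟩ := hX
  rcases isEmpty_or_nonempty A with hA | hA
  · refine ⟨∅, Set.finite_empty, fun p hp => hp.elim, ?_⟩
    ext t
    exact (hA.false (t [])).elim
  haveI : Inhabited A := Classical.inhabited_of_nonempty hA
  have hk0 : 0 < k := by omega
  let z : Fin k := ⟨0, hk0⟩
  set lbl : List A → (Word k → A) := fun w q => w.getD q.length default with hlbl
  set supp : List A → Word k → Set (Word k) :=
    fun w p => {q | q <+: p ∧ q.length < w.length} with hsupp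
  refine ⟨⋃ w ∈ F, (fun p : Word k => (supp w p, lbl w)) ''
      {p : Word k | p.length = w.length - 1}, ?_, ?_, ?_⟩
  · exact hFfin.biUnion fun w _ => ((List.finite_length_eq (Fin k) (w.length - 1)).image _)
  · rintro pat hpat
    simp only [Set.mem_iUnion, Set.mem_image, Set.mem_setOf_eq] at hpat
    obtain ⟨w, hw, p, hp, rfl⟩ := hpat
    constructor
    · refine Set.Finite.subset ((Set.finite_Iic p.length).image fun m => p.take m) ?_
      rintro q ⟨hq1, _⟩
      exact ⟨q.length, hq1.length_le, (List.prefix_iff_eq_take.mp hq1).symm⟩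
    · rintro q ⟨hq1, hq2⟩ v hv
      exact ⟨hv.trans hq1, lt_of_le_of_lt hv.length_le hq2⟩
  · ext t
    constructor
    · -- homTree ⊆ treeShiftOf
      intro ht pat hpat
      simp only [Set.mem_iUnion, Set.mem_image, Set.mem_setOf_eq] at hpat
      obtain ⟨w, hw, p, hp, rfl⟩ := hpat
      rintro ⟨s, hs⟩
      -- build a chain through s ++ p
      set c : ℕ → Word k := fun n => List.ofFn fun j : Fin n => (s ++ p).getD j z with hcdef
      have hchain : IsChain c := by
        constructor
        · simp [hcdef]
        · intro n
          refine ⟨(s ++ p).getD n z, ?_⟩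
          rw [hcdef]
          simp only [List.ofFn_succ', List.concat_eq_append, Fin.coe_castSucc, Fin.val_last]
      have hcn : ∀ n ≤ (s ++ p).length, c n = (s ++ p).take n := by
        intro n hn
        apply List.ext_getElem
        · simp only [hcdef, List.length_ofFn, List.length_take]
          omega
        · intro m h1 h2
          simp only [List.length_take, lt_min_iff] at h2
          simp only [hcdef, List.getElem_ofFn, List.getElem_take]
          exact List.getD_eq_getElem _ _ h2.2
      have hx := ht c hchain w hw s.length
      apply hx
      intro j
      have hjp : (j : ℕ) ≤ p.length := by
        have := j.2; omega
      have hclen : c (s.length + (j : ℕ)) = s ++ p.take j := by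
        rw [hcn _ (by simp only [List.length_append]; omega)]
        rw [List.take_append, List.take_of_length_le (by omega),
          Nat.add_sub_cancel_left]
      have hmem : p.take (j : ℕ) ∈ supp w p := by
        refine ⟨List.take_prefix _ _, ?_⟩
        simp only [List.length_take]
        have := j.2; omega
      have := hs _ hmem
      simp only [hclen]
      rw [this, hlbl]
      simp only [List.length_take, min_eq_left hjp]
      simp [List.getD_eq_getElem _ _ j.2]
    · -- treeShiftOf ⊆ homTree
      intro ht c hc w hw i hocc
      set s : Word k := c i with hsdef
      set p : Word k := (c (i + (w.length - 1))).drop i with hpdef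
      have hsp : s ++ p = c (i + (w.length - 1)) := by
        obtain ⟨r, hr⟩ := chain_prefix hc (Nat.le_add_right i (w.length - 1))
        rw [← hr, hpdef, ← hr, hsdef, List.drop_left' (chain_length hc i)]
      have hplen : p.length = w.length - 1 := by
        rw [hpdef]
        simp [chain_length hc]
      have hpat : (supp w p, lbl w) ∈
          ⋃ w ∈ F, (fun p : Word k => (supp w p, lbl w)) ''
            {p : Word k | p.length = w.length - 1} := by
        simp only [Set.mem_iUnion, Set.mem_image, Set.mem_setOf_eq]
        exact ⟨w, hw, p, hplen, rfl⟩
      refine ht _ hpat ⟨s, ?_⟩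
      rintro q ⟨hq1, hq2⟩
      have hql : q.length ≤ w.length - 1 := hplen ▸ hq1.length_le
      have hkey : s ++ q = c (i + q.length) := by
        have h1 : s ++ q <+: c (i + (w.length - 1)) := by
          rw [← hsp]
          obtain ⟨r, hr2⟩ := hq1
          exact ⟨r, by rw [List.append_assoc, hr2]⟩
        have h2 : c (i + q.length) <+: c (i + (w.length - 1)) :=
          chain_prefix hc (by omega)
        have hlen : (s ++ q).length = (c (i + q.length)).length := by
          simp [hsdef, chain_length hc]
        exact (List.prefix_of_prefix_length_le h1 h2 hlen.le).eq_of_length hlen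
      have h3 := hocc ⟨q.length, hq2⟩
      simp only [List.get_eq_getElem, Fin.val_mk] at h3
      rw [hkey]
      exact h3.trans (List.getD_eq_getElem _ _ hq2).symm

end TreeShiftPaper
end

section
/- A tree-shift T is a sofic tree-shift if and only if there exist a Markov tree-shift T' and a symbol map g : A(T') → A(T) such that the induced node-wise map g_* maps T' onto T. -/
/-!
A symbol map is a 0-block map and a Markov tree-shift is a tree-SFT (its forbidden patterns
are the disallowed parent–child pairs), so images of Markov tree-shifts are sofic.
Conversely, if `T` is the image of a tree-SFT `T'` under an `n`-block map, choose `N ≥ n`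
bounding the supports of the forbidden patterns of `T'`. Recoding each tree of `T'` by the
`N`-blocks seen at its nodes identifies `T'` with the Markov tree-shift whose alphabet is the
set of `N`-blocks avoiding the forbidden patterns at the root, and whose transitions are the
blocks that overlap consistently along an edge. The block map then becomes a symbol map.
-/

namespace TreeShiftPaper

variable {k : ℕ}

def markovTreeOf {α : Type*} (R : Fin k → α → α → Prop) : Set (Word k → α) :=
  {t | ∀ w i, R i (t w) (t (w ++ [i]))}

theorem markovTreeOf_comap_equiv {α β : Type*} (R : Fin k → α → α → Prop) (e : α ≃ β) :
    markovTreeOf (fun i a b => R i (e.symm a) (e.symm b)) = (e ∘ ·) '' markovTreeOf R := by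
  ext t
  refine ⟨fun ht => ⟨e.symm ∘ t, ht, by ext; simp⟩, ?_⟩
  rintro ⟨s, hs, rfl⟩ w i
  simpa using hs w i

theorem exists_image_markovTree_eq_image_markovTreeOf {α A : Type*} [Finite α]
    (R : Fin k → α → α → Prop) (g : α → A) :
    ∃ (d : ℕ) (M : Fin k → Matrix (Fin d) (Fin d) Bool) (g' : Fin d → A),
      (g' ∘ ·) '' markovTree k d M = (g ∘ ·) '' markovTreeOf R := by
  classical
  obtain ⟨d, ⟨e⟩⟩ := Finite.exists_equiv_fin α
  refine ⟨d, fun i => Matrix.of fun a b => decide (R i (e.symm a) (e.symm b)), g ∘ e.symm, ?_⟩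
  have hM : markovTree k d (fun i => Matrix.of fun a b => decide (R i (e.symm a) (e.symm b)))
      = markovTreeOf (fun i a b => R i (e.symm a) (e.symm b)) := by
    ext t
    simp [markovTree, markovTreeOf]
  rw [hM, markovTreeOf_comap_equiv, Set.image_image]
  congr! 2 with t
  ext w
  simp

theorem isTreeSFT_markovTree (d : ℕ) (M : Fin k → Matrix (Fin d) (Fin d) Bool) :
    IsTreeSFT (markovTree k d M) := by
  let pairPattern (a : Fin d) (b : Fin k → Fin d) : Word k → Fin d
    | [j] => b j
    | _ => a
  refine ⟨(fun ab => ({w | w.length ≤ 1}, pairPattern ab.1 ab.2)) ''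
      {ab : Fin d × (Fin k → Fin d) | ∃ i, M i ab.1 (ab.2 i) = false},
    (Set.toFinite _).image _, ?_, ?_⟩
  · rintro p ⟨ab, -, rfl⟩
    exact ⟨List.finite_length_le _ _, fun w hw v hv => hv.length_le.trans hw⟩
  · ext t
    constructor
    · rintro ht p ⟨⟨a, b⟩, ⟨i, hab⟩, rfl⟩ ⟨s, hs⟩
      have hroot : t s = a := by simpa using hs [] (by simp)
      have hchild : t (s ++ [i]) = b i := hs [i] (by simp)
      simpa [hroot, hchild, hab] using ht s i
    · intro ht w i
      by_contra hbad
      refine ht _ ⟨⟨t w, fun j => t (w ++ [j])⟩, ⟨i, by simpa using hbad⟩, rfl⟩ ⟨w, ?_⟩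
      rintro (_ | ⟨j, _ | ⟨j', v⟩⟩) hv
      · simp [pairPattern]
      · rfl
      · simp at hv

theorem IsTreeSFT.isSoficTree_image_comp {B : Type} [Fintype B] {A : Type*}
    {T' : Set (Word k → B)} (hT' : IsTreeSFT T') (g : B → A) :
    IsSoficTree ((g ∘ ·) '' T') :=
  ⟨B, inferInstance, T', 0, fun u => g (u []), hT', fun u v h => congrArg g (h [] le_rfl),
    by simp only [List.append_nil]; rfl⟩

section HigherBlock

variable {B : Type*} (N : ℕ)

/-- `N`-blocks over `B`: labelings of `Δ_N`. -/
abbrev Block (k : ℕ) (B : Type*) (N : ℕ) := {w : Word k // w.length ≤ N} → B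

def blockAt (t : Word k → B) (w : Word k) : Block k B N := fun z => t (w ++ z.1)

def Block.root (u : Block k B N) : B := u ⟨[], N.zero_le⟩

/-- Outside `Δ_N` the extension takes the junk value `u.root`. -/
def Block.extend (u : Block k B N) : Word k → B :=
  fun w => if h : w.length ≤ N then u ⟨w, h⟩ else u.root

def Block.Avoids (F : Set (Set (Word k) × (Word k → B))) (u : Block k B N) : Prop :=
  ∀ p ∈ F, ¬ ∀ (w : Word k) (hw : w.length ≤ N), w ∈ p.1 → u ⟨w, hw⟩ = p.2 w

/-- The blocks `u` and `v` agree where `v`, placed at the `i`-th child of the root of `u`,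
overlaps `u`. -/
def Block.Compatible (i : Fin k) (u v : Block k B N) : Prop :=
  ∀ (z : Word k) (h : (i :: z).length ≤ N), v ⟨z, by simp at h; omega⟩ = u ⟨i :: z, h⟩

variable {N}

theorem blockAt_compatible (t : Word k → B) (w : Word k) (i : Fin k) :
    (blockAt N t w).Compatible N i (blockAt N t (w ++ [i])) := by
  intro z h
  simp [blockAt]

theorem eq_blockAt_root_of_compatible {s : Word k → Block k B N}
    (hs : ∀ w i, (s w).Compatible N i (s (w ++ [i]))) (w : Word k) :
    s w = blockAt N (fun v => (s v).root) w := by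
  funext ⟨z, hz⟩
  induction z generalizing w with
  | nil => simp [blockAt, Block.root]
  | cons i z ih =>
    rw [← hs w i z hz, ih (w ++ [i]) (by simp at hz; omega)]
    simp [blockAt]

theorem forall_blockAt_avoids_iff {F : Set (Set (Word k) × (Word k → B))}
    (hF : ∀ p ∈ F, ∀ w ∈ p.1, w.length ≤ N) (t : Word k → B) :
    (∀ w, (blockAt N t w).Avoids N F) ↔ t ∈ treeShiftOf F := by
  simp only [Block.Avoids, blockAt, treeShiftOf, PatternAppears, Set.mem_ofPred_eq, not_exists]
  exact ⟨fun h p hp s hs => h s p hp fun w _ hw => hs w hw,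
    fun h s p hp hs => h p hp s fun w hw => hs w (hF p hp w hw) hw⟩

theorem blockMap_eq_extend_blockAt {A : Type*} {n : ℕ} (hn : n ≤ N) {g : (Word k → B) → A}
    (hg : ∀ u v : Word k → B, (∀ w : Word k, w.length ≤ n → u w = v w) → g u = g v)
    (t : Word k → B) (w : Word k) :
    g (fun z => t (w ++ z)) = g ((blockAt N t w).extend N) :=
  hg _ _ fun z hz => by simp [Block.extend, blockAt, hz.trans hn]

theorem image_blockMap_treeShiftOf {A : Type*} {n : ℕ} (hn : n ≤ N)
    {F : Set (Set (Word k) × (Word k → B))} (hF : ∀ p ∈ F, ∀ w ∈ p.1, w.length ≤ N)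
    {g : (Word k → B) → A}
    (hg : ∀ u v : Word k → B, (∀ w : Word k, w.length ≤ n → u w = v w) → g u = g v) :
    (fun t w => g (fun z => t (w ++ z))) '' treeShiftOf F =
      ((fun u : {u : Block k B N // u.Avoids N F} => g (u.1.extend N)) ∘ ·) ''
        markovTreeOf (fun i u v => u.1.Compatible N i v.1) := by
  ext x
  constructor
  · rintro ⟨t, ht, rfl⟩
    refine ⟨fun w => ⟨blockAt N t w, (forall_blockAt_avoids_iff hF t).2 ht w⟩,
      fun w i => blockAt_compatible t w i, ?_⟩
    funext w
    exact (blockMap_eq_extend_blockAt hn hg t w).symm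
  · rintro ⟨s, hs, rfl⟩
    have hblock := eq_blockAt_root_of_compatible (s := fun w => (s w).1) hs
    refine ⟨fun v => (s v).1.root,
      (forall_blockAt_avoids_iff hF _).1 fun w => hblock w ▸ (s w).2, ?_⟩
    funext w
    exact (blockMap_eq_extend_blockAt hn hg _ w).trans (by rw [← hblock])

end HigherBlock

theorem IsSoficTree.exists_markovTree_image_eq {A : Type*} {T : Set (Word k → A)}
    (hT : IsSoficTree T) :
    ∃ (d : ℕ) (M : Fin k → Matrix (Fin d) (Fin d) Bool) (g : Fin d → A),
      (g ∘ ·) '' markovTree k d M = T := by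
  obtain ⟨B, _, T', n, g, ⟨F, hFfin, hFsupp, rfl⟩, hg, rfl⟩ := hT
  obtain ⟨N₀, hN₀⟩ : BddAbove (List.length '' ⋃ p ∈ F, p.1) :=
    ((hFfin.biUnion fun p hp => (hFsupp p hp).1).image _).bddAbove
  have hF : ∀ p ∈ F, ∀ w ∈ p.1, w.length ≤ max n N₀ := fun p hp w hw =>
    (hN₀ ⟨w, Set.mem_biUnion hp hw, rfl⟩).trans (le_max_right _ _)
  have : Finite {w : Word k // w.length ≤ max n N₀} := (List.finite_length_le _ _).to_subtype
  rw [image_blockMap_treeShiftOf (le_max_left _ _) hF hg]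
  exact exists_image_markovTree_eq_image_markovTreeOf _ _

theorem stmt2_general {k : ℕ} {A : Type*} (T : Set (Word k → A)) :
    IsSoficTree T ↔
      ∃ (d : ℕ) (M : Fin k → Matrix (Fin d) (Fin d) Bool) (g : Fin d → A),
        (fun t : Word k → Fin d => g ∘ t) '' (markovTree k d M) = T := by
  refine ⟨IsSoficTree.exists_markovTree_image_eq, ?_⟩
  rintro ⟨d, M, g, rfl⟩
  exact (isTreeSFT_markovTree d M).isSoficTree_image_comp g

/-- A tree-shift `T` is sofic iff there exist a Markov tree-shift and a symbol map whose
induced node-wise map sends the Markov tree-shift onto `T`. -/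
theorem stmt2 {k : ℕ} (hk : 2 ≤ k) {A : Type*} [Fintype A] (T : Set (Word k → A))
    (hT : IsTreeShift T) :
    IsSoficTree T ↔
      ∃ (d : ℕ) (M : Fin k → Matrix (Fin d) (Fin d) Bool) (g : Fin d → A),
        (fun t : Word k → Fin d => g ∘ t) '' (markovTree k d M) = T :=
  stmt2_general T

end TreeShiftPaper
end

section
/- Let Y be a one-sided shift space over a finite alphabet. If the hom tree-shift T_Y is a sofic tree-shift, then Y is a sofic shift. -/
namespace TreeShiftPaper

section Aux

variable {k : ℕ} {Bb : Type}

/-- `treeShiftOf` is shift-invariant. -/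
lemma shift_mem_treeShiftOf {F : Set ((Set (Word k)) × (Word k → Bb))}
    {t : Word k → Bb} (ht : t ∈ treeShiftOf F) (s : Word k) :
    (fun w => t (s ++ w)) ∈ treeShiftOf F := by
  intro p hp hap
  obtain ⟨s', hs'⟩ := hap
  exact ht p hp ⟨s ++ s', fun w hw => by
    rw [List.append_assoc]; exact hs' w hw⟩

/-- Build a full tree from a sequence of trees placed along the branch `z0^∞`. -/
def build (gt : ℕ → Word k → Bb) (z0 : Fin k) : ℕ → Word k → Bb
  | i, [] => gt i []
  | i, a :: w => if a = z0 then build gt z0 (i + 1) w else gt i (a :: w)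

lemma build_replicate (gt : ℕ → Word k → Bb) (z0 : Fin k) :
    ∀ (j i : ℕ) (z : Word k),
      build gt z0 i (List.replicate j z0 ++ z) = build gt z0 (i + j) z := by
  intro j
  induction j with
  | zero => intro i z; simp
  | succ j ih =>
      intro i z
      have h1 : List.replicate (j + 1) z0 ++ z = z0 :: (List.replicate j z0 ++ z) := by
        simp [List.replicate_succ]
      have h2 : i + (j + 1) = (i + 1) + j := by omega
      rw [h1, h2, ← ih (i + 1) z]
      simp [build]

lemma build_eq (gt : ℕ → Word k → Bb) (z0 : Fin k) (m : ℕ)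
    (Hc : ∀ (i : ℕ) (w : Word k), w.length + 1 ≤ m → gt (i + 1) w = gt i (z0 :: w)) :
    ∀ (z : Word k) (i : ℕ), z.length ≤ m → build gt z0 i z = gt i z := by
  intro z
  induction z with
  | nil => intro i _; rfl
  | cons a w ih =>
      intro i hz
      by_cases ha : a = z0
      · subst ha
        have h1 : w.length + 1 ≤ m := by simpa using hz
        have : build gt a i (a :: w) = build gt a (i + 1) w := by simp [build]
        rw [this, ih i.succ (Nat.le_of_succ_le h1), Hc i w h1]
      · simp [build, ha]

lemma build_cover {F : Set ((Set (Word k)) × (Word k → Bb))}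
    (gt : ℕ → Word k → Bb) (z0 : Fin k) (m : ℕ)
    (hgt : ∀ i, gt i ∈ treeShiftOf F)
    (Hc : ∀ (i : ℕ) (w : Word k), w.length + 1 ≤ m → gt (i + 1) w = gt i (z0 :: w)) :
    ∀ (s : Word k) (i : ℕ), ∃ t' ∈ treeShiftOf F,
      ∀ z : Word k, z.length ≤ m → build gt z0 i (s ++ z) = t' z := by
  intro s
  induction s with
  | nil =>
      intro i
      exact ⟨gt i, hgt i, fun z hz => by simpa using build_eq gt z0 m Hc z i hz⟩
  | cons a s ih =>
      intro i
      by_cases ha : a = z0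
      · subst ha
        obtain ⟨t', ht', hagree⟩ := ih (i + 1)
        refine ⟨t', ht', fun z hz => ?_⟩
        have h1 : (a :: s) ++ z = a :: (s ++ z) := rfl
        have h2 : build gt a i (a :: (s ++ z)) = build gt a (i + 1) (s ++ z) := by
          simp [build]
        rw [h1, h2]
        exact hagree z hz
      · refine ⟨fun w => gt i ((a :: s) ++ w), shift_mem_treeShiftOf (hgt i) (a :: s),
          fun z hz => ?_⟩
        show build gt z0 i (a :: (s ++ z)) = gt i ((a :: s) ++ z)
        simp [build, ha]

lemma build_mem {F : Set ((Set (Word k)) × (Word k → Bb))}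
    (gt : ℕ → Word k → Bb) (z0 : Fin k) (m : ℕ)
    (hgt : ∀ i, gt i ∈ treeShiftOf F)
    (Hc : ∀ (i : ℕ) (w : Word k), w.length + 1 ≤ m → gt (i + 1) w = gt i (z0 :: w))
    (hF : ∀ p ∈ F, ∀ w ∈ p.1, w.length ≤ m) :
    (fun w => build gt z0 0 w) ∈ treeShiftOf F := by
  rintro p hp ⟨s, hs⟩
  obtain ⟨t', ht', hagree⟩ := build_cover gt z0 m hgt Hc s 0
  refine ht' p hp ⟨[], fun w hw => ?_⟩
  rw [List.nil_append, ← hagree w (hF p hp w hw)]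
  exact hs w hw

/-- Membership in the pair-SFT. -/
lemma shiftOf_pairs {B : Type*} (P : B → B → Prop) (x : ℕ → B) :
    x ∈ shiftOf ((fun ab : B × B => [ab.1, ab.2]) '' {ab | ¬ P ab.1 ab.2}) ↔
      ∀ i, P (x i) (x (i + 1)) := by
  constructor
  · intro hx i
    by_contra hP
    refine hx [x i, x (i + 1)] ⟨(x i, x (i + 1)), hP, rfl⟩ i ?_
    intro j
    fin_cases j <;> rfl
  · rintro hx w ⟨⟨a, b⟩, hab, rfl⟩ i hocc
    have h0 := hocc ⟨0, by norm_num⟩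
    have h1 := hocc ⟨1, by norm_num⟩
    simp only [List.get] at h0 h1
    apply hab
    have e0 : x i = a := by simpa using h0
    have e1 : x (i + 1) = b := by simpa using h1
    rw [← e0, ← e1]
    exact hx i

/-- The constant-by-level tree of a point of `Y` lies in the hom tree-shift. -/
lemma const_mem_homTree {k : ℕ} {A : Type*} (Y : Set (ℕ → A)) {y : ℕ → A} (hy : y ∈ Y) :
    (fun w : Word k => y w.length) ∈ homTree k Y := by
  intro c hc
  have hlen : ∀ n, (c n).length = n := by
    intro n
    induction n with
    | zero => rw [hc.1]; rfl
    | succ n ih =>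
        obtain ⟨i, hi⟩ := hc.2 n
        rw [hi, List.length_append, ih]
        rfl
  have he : (fun n => y (c n).length) = y := funext fun n => by rw [hlen]
  show (fun n => y (c n).length) ∈ Y
  rw [he]
  exact hy

/-- The empty shift space is sofic. -/
lemma sofic_empty {A : Type*} : IsSofic (∅ : Set (ℕ → A)) := by
  refine ⟨Empty, inferInstance, shiftOf (∅ : Set (List Empty)), 0, fun x => (x 0).elim,
    ⟨∅, Set.finite_empty, rfl⟩, fun u v _ => (u 0).elim, ?_⟩
  rw [Set.eq_empty_iff_forall_notMem]
  rintro y ⟨x, _, _⟩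
  exact (x 0).elim

end Aux

/-- If the hom tree-shift `T_Y` of a one-sided shift space `Y` is a sofic tree-shift,
then `Y` is a sofic shift. -/
theorem stmt3 {k : ℕ} (hk : 2 ≤ k) {A : Type*} [Fintype A] (Y : Set (ℕ → A))
    (hY : IsShift Y) (h : IsSoficTree (homTree k Y)) : IsSofic Y := by
  classical
  obtain ⟨Bb, instB, T', n, g, hSFT, hloc, himg⟩ := h
  by_cases hne : Nonempty Bb
  swap
  · have hYe : Y = ∅ := by
      rw [Set.eq_empty_iff_forall_notMem]
      intro y hy
      have hmem := const_mem_homTree (k := k) Y hy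
      rw [← himg] at hmem
      obtain ⟨t, _, _⟩ := hmem
      exact hne ⟨t []⟩
    rw [hYe]
    exact sofic_empty
  obtain ⟨F, hFfin, hFsup, hT'⟩ := hSFT
  haveI : Inhabited Bb := Classical.inhabited_of_nonempty hne
  obtain ⟨m, hnm, hFm⟩ : ∃ m, n ≤ m ∧ ∀ p ∈ F, ∀ w ∈ p.1, w.length ≤ m := by
    have hS : (⋃ p ∈ F, (p : (Set (Word k)) × (Word k → Bb)).1).Finite :=
      hFfin.biUnion fun p hp => (hFsup p hp).1
    obtain ⟨M, hM⟩ := (hS.image List.length).bddAbove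
    refine ⟨max n M, le_max_left _ _, fun p hp w hw => ?_⟩
    exact le_trans (hM (Set.mem_image_of_mem _ (Set.mem_biUnion hp hw)))
      (le_max_right _ _)
  have hshift : ∀ t ∈ T', ∀ s : Word k, (fun w => t (s ++ w)) ∈ T' := by
    intro t ht s
    rw [hT'] at ht ⊢
    exact shift_mem_treeShiftOf ht s
  set z0 : Fin k := ⟨0, by omega⟩ with hz0
  set D := {w : Word k // w.length ≤ m} with hD
  haveI : Finite D := (List.finite_length_le (Fin k) m).to_subtype
  set B0 := D → Bb with hB0
  haveI : Finite B0 := by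
    haveI : Finite Bb := Finite.of_fintype Bb
    infer_instance
  set Good : B0 → Prop := fun b => ∃ t ∈ T', ∀ w : D, t w.val = b w with hGood
  set Pred : B0 → B0 → Prop := fun a b => Good a ∧ Good b ∧
      ∀ (w : Word k) (hw : w.length ≤ m) (hw1 : w.length + 1 ≤ m),
        b ⟨w, hw⟩ = a ⟨z0 :: w, by simpa using hw1⟩ with hPred
  set F' : Set (List B0) := (fun ab : B0 × B0 => [ab.1, ab.2]) '' {ab | ¬ Pred ab.1 ab.2}
    with hF'
  set ext : B0 → (Word k → Bb) := fun b z =>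
    if h : z.length ≤ m then b ⟨z, h⟩ else default with hext
  refine ⟨B0, Fintype.ofFinite B0, shiftOf F', 1, fun x => g (ext (x 0)),
    ⟨F', (Set.toFinite _).image _, rfl⟩, ?_, ?_⟩
  · intro u v huv
    have h0 : u 0 = v 0 := huv 0 one_pos
    show g (ext (u 0)) = g (ext (v 0))
    rw [h0]
  · ext y
    constructor
    · rintro ⟨x, hx, rfl⟩
      rw [shiftOf_pairs Pred x] at hx
      choose gt hgtT hgtw using fun i => (hx i).1
      have Hc : ∀ (i : ℕ) (w : Word k), w.length + 1 ≤ m →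
          gt (i + 1) w = gt i (z0 :: w) := by
        intro i w h1
        have hw : w.length ≤ m := Nat.le_of_succ_le h1
        have e1 := hgtw (i + 1) ⟨w, hw⟩
        have e2 := hgtw i ⟨z0 :: w, by simpa using h1⟩
        have e3 := (hx i).2.2 w hw h1
        exact e1.trans (e3.trans e2.symm)
      have hgtF : ∀ i, gt i ∈ treeShiftOf F := by
        intro i
        rw [← hT']
        exact hgtT i
      have htT' : (fun w => build gt z0 0 w) ∈ T' := by
        rw [hT']
        exact build_mem gt z0 m hgtF Hc hFm
      have hkey : ∀ (i : ℕ) (z : Word k) (hz : z.length ≤ m),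
          build gt z0 0 (List.replicate i z0 ++ z) = x i ⟨z, hz⟩ := by
        intro i z hz
        rw [build_replicate gt z0 i 0 z]
        have h0 : 0 + i = i := by omega
        rw [h0, build_eq gt z0 m Hc z i hz]
        exact hgtw i ⟨z, hz⟩
      have hmem : (fun w => g (fun z => build gt z0 0 (w ++ z))) ∈ homTree k Y := by
        rw [← himg]
        exact ⟨fun w => build gt z0 0 w, htT', rfl⟩
      have hchain : IsChain (fun i : ℕ => List.replicate i z0) :=
        ⟨rfl, fun i => ⟨z0, by simp [List.replicate_succ']⟩⟩
      have hy := hmem _ hchain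
      have heq : (fun i => g (ext (x (i + 0)))) =
          fun i => g (fun z => build gt z0 0 (List.replicate i z0 ++ z)) := by
        funext i
        apply hloc
        intro z hz
        have hzm : z.length ≤ m := le_trans hz hnm
        rw [hkey i z hzm]
        show ext (x i) z = x i ⟨z, hzm⟩
        rw [hext]
        simp only [dif_pos hzm]
      show (fun i => g (ext (x (i + 0)))) ∈ Y
      rw [heq]
      exact hy
    · intro hy
      have hty := const_mem_homTree (k := k) Y hy
      rw [← himg] at hty
      obtain ⟨t', ht', htg⟩ := hty
      refine ⟨fun i => fun w : D => t' (List.replicate i z0 ++ w.val), ?_, ?_⟩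
      · rw [shiftOf_pairs Pred]
        intro i
        refine ⟨⟨fun w => t' (List.replicate i z0 ++ w),
            hshift t' ht' _, fun w => rfl⟩,
          ⟨fun w => t' (List.replicate (i + 1) z0 ++ w),
            hshift t' ht' _, fun w => rfl⟩, ?_⟩
        intro w hw hw1
        show t' (List.replicate (i + 1) z0 ++ w) = t' (List.replicate i z0 ++ z0 :: w)
        rw [List.replicate_succ', List.append_assoc]
        rfl
      · funext i
        show g (ext (fun w : D => t' (List.replicate (i + 0) z0 ++ w.val))) = y i
        have hstep : g (ext (fun w : D => t' (List.replicate (i + 0) z0 ++ w.val))) =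
            g (fun z => t' (List.replicate i z0 ++ z)) := by
          apply hloc
          intro z hz
          have hzm : z.length ≤ m := le_trans hz hnm
          show ext (fun w : D => t' (List.replicate (i + 0) z0 ++ w.val)) z =
            t' (List.replicate i z0 ++ z)
          rw [hext]
          simp only [dif_pos hzm, Nat.add_zero]
        rw [hstep]
        have := congrFun htg (List.replicate i z0)
        simpa using this

end TreeShiftPaper
end

section
/- Let Y be a one-sided shift space over a finite alphabet. If Y is a sofic shift, then the hom tree-shift T_Y is a sofic tree-shift. -/
namespace TreeShiftPaper

/-! ### Auxiliary machinery for `stmt4` -/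

section Koenig

variable {St : Type*}

/-- There is a run of `step` from depth `d` to depth `e` starting at `u`,
staying in the sets `R`. -/
def RunTo (R : ℕ → St → Prop) (step : ℕ → St → St → Prop) (d e : ℕ) (u : St) : Prop :=
  ∃ r : ℕ → St, r d = u ∧ (∀ j, d ≤ j → j ≤ e → R j (r j)) ∧
    ∀ j, d ≤ j → j + 1 ≤ e → step j (r j) (r (j + 1))

theorem runto_trunc {R : ℕ → St → Prop} {step : ℕ → St → St → Prop} {d e e' : ℕ} {u : St}
    (h : RunTo R step d e' u) (he : e ≤ e') : RunTo R step d e u := by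
  obtain ⟨r, h1, h2, h3⟩ := h
  exact ⟨r, h1, fun j hj hj' => h2 j hj (hj'.trans he), fun j hj hj' => h3 j hj (hj'.trans he)⟩

theorem runto_exists {R : ℕ → St → Prop} {step : ℕ → St → St → Prop}
    (hne : ∀ d, ∃ v, R d v) (hpred : ∀ d v, R (d + 1) v → ∃ u, R d u ∧ step d u v) :
    ∀ g d, ∃ u, R d u ∧ RunTo R step d (d + g) u := by
  intro g
  induction g with
  | zero =>
    intro d
    obtain ⟨v, hv⟩ := hne d
    refine ⟨v, hv, fun _ => v, rfl, fun j hj hj' => ?_, fun j hj hj' => ?_⟩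
    · have : j = d := le_antisymm (by omega) hj
      subst this; exact hv
    · omega
  | succ g ih =>
    intro d
    obtain ⟨u', hu', r, hr1, hr2, hr3⟩ := ih (d + 1)
    obtain ⟨u, hu, hstep⟩ := hpred d u' hu'
    refine ⟨u, hu, fun j => if j = d then u else r j, by simp, fun j hj hj' => ?_,
      fun j hj hj' => ?_⟩
    · by_cases hjd : j = d
      · simp [hjd, hu]
      · simp only [if_neg hjd]
        exact hr2 j (by omega) (by omega)
    · by_cases hjd : j = d
      · subst hjd
        simp only [if_pos rfl, if_neg (by omega : ¬ j + 1 = j)]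
        rwa [hr1]
      · simp only [if_neg hjd, if_neg (by omega : ¬ j + 1 = d)]
        exact hr3 j (by omega) (by omega)

theorem finint [Finite St] (U : ℕ → Set St) (hmono : ∀ e, U (e + 1) ⊆ U e)
    (hne : ∀ e, (U e).Nonempty) : ∃ u, ∀ e, u ∈ U e := by
  have hmono' : ∀ e e', e ≤ e' → U e' ⊆ U e := by
    intro e e' he
    induction he with
    | refl => exact le_refl _
    | step h ih => exact (hmono _).trans ih
  classical
  choose g hg using hne
  obtain ⟨y, hy⟩ := Finite.exists_infinite_fiber g
  have hy' : (g ⁻¹' {y}).Infinite := Set.infinite_coe_iff.mp hy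
  refine ⟨y, fun e => ?_⟩
  obtain ⟨e', he', hlt⟩ := hy'.exists_gt e
  have : g e' = y := he'
  rw [← this]
  exact hmono' e e' hlt.le (hg e')

theorem koenig [Finite St] (R : ℕ → St → Prop) (step : ℕ → St → St → Prop)
    (hne : ∀ d, ∃ v, R d v) (hpred : ∀ d v, R (d + 1) v → ∃ u, R d u ∧ step d u v) :
    ∃ r : ℕ → St, (∀ d, R d (r d)) ∧ ∀ d, step d (r d) (r (d + 1)) := by
  classical
  set S : ℕ → Set St := fun d => {u | R d u ∧ ∀ e, d ≤ e → RunTo R step d e u} with hS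
  have hSne : ∀ d, (S d).Nonempty := by
    intro d
    obtain ⟨u, hu⟩ := finint (fun e => {u | R d u ∧ RunTo R step d (d + e) u})
      (fun e u hu => ⟨hu.1, runto_trunc hu.2 (by omega)⟩) (fun e => runto_exists hne hpred e d)
    exact ⟨u, (hu 0).1, fun e he => by
      have := (hu (e - d)).2
      rwa [Nat.add_sub_cancel' he] at this⟩
  have hSsucc : ∀ d u, u ∈ S d → ∃ u', u' ∈ S (d + 1) ∧ step d u u' := by
    intro d u hu
    obtain ⟨u', hu'⟩ := finint
      (fun e => {u' | (R (d + 1) u' ∧ step d u u') ∧ RunTo R step (d + 1) (d + 1 + e) u'})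
      (fun e u' h => ⟨h.1, runto_trunc h.2 (by omega)⟩)
      (by
        intro e
        obtain ⟨r, hr1, hr2, hr3⟩ := hu.2 (d + 1 + e) (by omega)
        refine ⟨r (d + 1), ⟨⟨hr2 (d + 1) (by omega) (by omega), ?_⟩, r, rfl,
          fun j hj hj' => hr2 j (by omega) hj', fun j hj hj' => hr3 j (by omega) hj'⟩⟩
        have := hr3 d (le_refl d) (by omega)
        rwa [hr1] at this)
    refine ⟨u', ⟨(hu' 0).1.1, fun e he => ?_⟩, (hu' 0).1.2⟩
    have := (hu' (e - (d + 1))).2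
    rwa [Nat.add_sub_cancel' he] at this
  -- build the infinite run
  have h0 := hSne 0
  choose nxt hnxt1 hnxt2 using hSsucc
  let q : ∀ d : ℕ, {u // u ∈ S d} := fun d =>
    Nat.rec (motive := fun d => {u // u ∈ S d}) ⟨h0.choose, h0.choose_spec⟩
      (fun d prev => ⟨nxt d prev.1 prev.2, hnxt1 d prev.1 prev.2⟩) d
  refine ⟨fun d => (q d).1, fun d => (q d).2.1, fun d => ?_⟩
  exact hnxt2 d (q d).1 (q d).2

end Koenig

section LocalSFT

variable {k : ℕ} {C : Type*}

theorem prefix_singleton {x : Fin k} {v : Word k} (h : v <+: [x]) : v = [] ∨ v = [x] := by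
  obtain ⟨t, ht⟩ := h
  cases v with
  | nil => exact Or.inl rfl
  | cons a v' =>
    right
    simp only [List.cons_append, List.cons.injEq] at ht
    obtain ⟨rfl, ht2⟩ := ht
    obtain ⟨h1, -⟩ := List.append_eq_nil_iff.mp ht2
    subst h1
    rfl

/-- A tree-shift defined by a single-node condition and parent/child conditions
over a finite alphabet is a tree-SFT. -/
theorem isTreeSFT_local [Fintype C] (C₀ : C → Prop) (C₁ : Fin k → C → C → Prop) :
    IsTreeSFT {s : Word k → C | ∀ w, C₀ (s w) ∧ ∀ i, C₁ i (s w) (s (w ++ [i]))} := by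
  classical
  set F : Set ((Set (Word k)) × (Word k → C)) :=
    {p | ∃ b : C, ¬ C₀ b ∧ p = ({([] : Word k)}, fun _ => b)} ∪
    {p | ∃ (i : Fin k) (b b' : C), ¬ C₁ i b b' ∧
      p = ({[], [i]}, fun z => if z = [i] then b' else b)} with hF
  refine ⟨F, ?_, ?_, ?_⟩
  · apply Set.Finite.union
    · apply Set.Finite.subset (Set.finite_range
        (fun b : C => (({([] : Word k)} : Set (Word k)), fun _ => b)))
      rintro p ⟨b, _, rfl⟩; exact ⟨b, rfl⟩
    · apply Set.Finite.subset (Set.finite_range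
        (fun x : Fin k × C × C => ((({[], [x.1]} : Set (Word k))),
          fun z => if z = [x.1] then x.2.2 else x.2.1)))
      rintro p ⟨i, b, b', _, rfl⟩; exact ⟨⟨i, b, b'⟩, rfl⟩
  · rintro p (⟨b, _, rfl⟩ | ⟨i, b, b', _, rfl⟩)
    · refine ⟨Set.finite_singleton _, ?_⟩
      rintro w hw v hv
      simp only [Set.mem_singleton_iff] at hw
      subst hw
      simp only [Set.mem_singleton_iff]
      simpa using List.prefix_nil.mp hv
    · refine ⟨(Set.finite_singleton _).insert _, ?_⟩
      rintro w hw v hv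
      rcases hw with hw | hw
      · subst hw
        simp only [Set.mem_insert_iff]
        left; exact List.prefix_nil.mp hv
      · simp only [Set.mem_singleton_iff] at hw
        subst hw
        rcases prefix_singleton hv with rfl | rfl
        · exact Set.mem_insert _ _
        · exact Set.mem_insert_of_mem _ rfl
  · ext t
    simp only [Set.mem_setOf_eq, treeShiftOf]
    constructor
    · intro ht p hp happ
      obtain ⟨s, hs⟩ := happ
      rcases hp with ⟨b, hb, rfl⟩ | ⟨i, b, b', hb, rfl⟩
      · have := hs [] rfl
        simp only [List.append_nil] at this
        exact hb (this ▸ (ht s).1)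
      · have h1 : t s = b := by simpa using hs [] (Set.mem_insert _ _)
        have h2 : t (s ++ [i]) = b' := by simpa using hs [i] (Set.mem_insert_of_mem _ rfl)
        exact hb (h1 ▸ h2 ▸ (ht s).2 i)
    · intro ht w
      constructor
      · by_contra hC
        exact ht _ (Or.inl ⟨t w, hC, rfl⟩) ⟨w, by
          rintro z hz
          simp only [Set.mem_singleton_iff] at hz
          subst hz
          simp⟩
      · intro i
        by_contra hC
        refine ht _ (Or.inr ⟨i, t w, t (w ++ [i]), hC, rfl⟩) ⟨w, ?_⟩
        rintro z (hz | hz)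
        · subst hz; simp
        · simp only [Set.mem_singleton_iff] at hz
          subst hz
          simp

end LocalSFT

section Construction

variable {A B : Type*} (m : ℕ)

/-- Extend a finite window to an infinite sequence (garbage beyond `m`). -/
def extFn (u : Fin (m + 1) → B) : ℕ → B :=
  fun j => if h : j < m + 1 then u ⟨j, h⟩ else u 0

/-- The window of length `m+1` of `x` starting at `d`. -/
def winF (d : ℕ) (x : ℕ → B) : Fin (m + 1) → B := fun j => x (d + j)

/-- The window contains no forbidden word at its start. -/
def GoodF (FX : Set (List B)) (u : Fin (m + 1) → B) : Prop :=
  ∀ w ∈ FX, ¬ OccursAt (extFn m u) 0 w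

/-- `u'` is the shift of `u` by one (on the overlap). -/
def followsF (u u' : Fin (m + 1) → B) : Prop :=
  ∀ (j : ℕ) (h : j + 1 < m + 1), u' ⟨j, by omega⟩ = u ⟨j + 1, h⟩

variable (f : (ℕ → B) → A) (FX : Set (List B))

/-- Single-node condition on labels. -/
def CondZ (b : A × ((Fin (m + 1) → B) → Bool)) : Prop :=
  (∃ u, b.2 u = true) ∧ ∀ u, b.2 u = true → f (extFn m u) = b.1 ∧ GoodF m FX u

/-- Parent-child condition: every state of the child has a predecessor in the parent. -/
def CondS (b b' : A × ((Fin (m + 1) → B) → Bool)) : Prop :=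
  ∀ u', b'.2 u' = true → ∃ u, b.2 u = true ∧ followsF m u u'

/-- The covering tree-SFT. -/
def TsetC (k : ℕ) : Set (Word k → A × ((Fin (m + 1) → B) → Bool)) :=
  {s | ∀ w, CondZ m f FX (s w) ∧ ∀ i : Fin k, CondS m (s w) (s (w ++ [i]))}

end Construction

section MainLemmas

variable {k : ℕ} {A B : Type*}

theorem mem_shiftOf_iff_good (m : ℕ) (FX : Set (List B)) (hFm : ∀ w ∈ FX, w.length ≤ m + 1)
    (x : ℕ → B) : x ∈ shiftOf FX ↔ ∀ d, GoodF m FX (winF m d x) := by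
  constructor
  · intro hx d w hw hocc
    refine hx w hw d ?_
    intro j
    have hj : (j : ℕ) < m + 1 := lt_of_lt_of_le j.2 (hFm w hw)
    have := hocc j
    simpa only [extFn, winF, dif_pos hj, Nat.zero_add] using this
  · intro hx w hw d hocc
    refine hx d w hw ?_
    intro j
    have hj : (j : ℕ) < m + 1 := lt_of_lt_of_le j.2 (hFm w hw)
    simp only [extFn, winF, dif_pos hj, Nat.zero_add]
    exact hocc j

theorem fOf_win (m n : ℕ) (hn : n ≤ m + 1) (f : (ℕ → B) → A)
    (hf : ∀ u v : ℕ → B, (∀ j < n, u j = v j) → f u = f v) (d : ℕ) (x : ℕ → B) :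
    f (extFn m (winF m d x)) = f (fun j => x (d + j)) := by
  apply hf
  intro j hj
  have hj' : j < m + 1 := lt_of_lt_of_le hj hn
  simp [extFn, winF, dif_pos hj']

/-- Forward direction: every chain projection of a tree in `TsetC` is the image
of a point of the SFT. -/
theorem forwardA [Finite B] (m n : ℕ) (hn : n ≤ m + 1) (hk : 0 < k)
    (f : (ℕ → B) → A) (hf : ∀ u v : ℕ → B, (∀ j < n, u j = v j) → f u = f v)
    (FX : Set (List B)) (hFm : ∀ w ∈ FX, w.length ≤ m + 1)
    (s : Word k → A × ((Fin (m + 1) → B) → Bool)) (hs : s ∈ TsetC m f FX k)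
    (c : ℕ → Word k) (hc : IsChain c) :
    ∃ x ∈ shiftOf FX, ∀ d, f (fun j => x (d + j)) = (s (c d)).1 := by
  classical
  set R : ℕ → (Fin (m + 1) → B) → Prop := fun d u => (s (c d)).2 u = true with hR
  have hne : ∀ d, ∃ v, R d v := fun d => (hs (c d)).1.1
  have hpred : ∀ d v, R (d + 1) v → ∃ u, R d u ∧ followsF m u v := by
    intro d v hv
    obtain ⟨i, hi⟩ := hc.2 d
    have := (hs (c d)).2 i
    rw [← hi] at this
    exact this v hv
  obtain ⟨r, hrR, hrstep⟩ := koenig R (fun _ u v => followsF m u v) hne hpred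
  set x : ℕ → B := fun i => r i 0 with hx
  have hwin : ∀ d (j : ℕ) (h : j < m + 1), r d ⟨j, h⟩ = x (d + j) := by
    intro d j
    induction j generalizing d with
    | zero => intro h; simp [hx]
    | succ j ih =>
      intro h
      have h1 := hrstep d j h
      rw [← h1, show d + (j + 1) = (d + 1) + j from by omega]
      exact ih (d + 1) (by omega)
  have hwin' : ∀ d, winF m d x = r d := by
    intro d
    funext j
    rw [winF, ← hwin d j j.2]
  refine ⟨x, ?_, ?_⟩
  · rw [mem_shiftOf_iff_good m FX hFm]
    intro d
    rw [hwin']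
    exact ((hs (c d)).1.2 (r d) (hrR d)).2
  · intro d
    have := ((hs (c d)).1.2 (r d) (hrR d)).1
    rw [← this, ← hwin' d, fOf_win m n hn f hf]

/-- The canonical chain through a fixed word, padding with `0`s. -/
def chainThrough (hk : 0 < k) (w : Word k) : ℕ → Word k :=
  fun i => List.take i w ++ List.replicate (i - w.length) ⟨0, hk⟩

theorem chainThrough_isChain (hk : 0 < k) (w : Word k) : IsChain (chainThrough hk w) := by
  constructor
  · simp [chainThrough]
  · intro i
    by_cases hi : i < w.length
    · refine ⟨w.get ⟨i, hi⟩, ?_⟩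
      simp only [chainThrough]
      rw [show i + 1 - w.length = 0 by omega, show i - w.length = 0 by omega]
      simp only [List.replicate_zero, List.append_nil]
      rw [List.take_succ, List.getElem?_eq_getElem hi]
      simp [List.get_eq_getElem]
    · refine ⟨⟨0, hk⟩, ?_⟩
      simp only [chainThrough]
      rw [List.take_of_length_le (by omega), List.take_of_length_le (by omega),
        show i + 1 - w.length = (i - w.length) + 1 by omega, List.replicate_succ',
        List.append_assoc]

theorem chainThrough_take (hk : 0 < k) (w : Word k) (i : ℕ) (hi : i ≤ w.length) :
    chainThrough hk w i = List.take i w := by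
  simp [chainThrough, show i - w.length = 0 by omega]

/-- Backward direction: every tree of the hom tree-shift lifts to `TsetC`. -/
theorem backwardB [Finite B] (m n : ℕ) (hn : n ≤ m + 1) (hk : 0 < k)
    (f : (ℕ → B) → A) (hf : ∀ u v : ℕ → B, (∀ j < n, u j = v j) → f u = f v)
    (FX : Set (List B)) (hFm : ∀ w ∈ FX, w.length ≤ m + 1)
    (Y : Set (ℕ → A))
    (hY : (fun x : ℕ → B => fun i => f (fun j => x (i + j))) '' shiftOf FX = Y)
    (τ : Word k → A) (hτ : τ ∈ homTree k Y) :
    ∃ s ∈ TsetC m f FX k, ∀ w, (s w).1 = τ w := by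
  classical
  set Q : Word k → (Fin (m + 1) → B) → Prop := fun w u =>
    ∃ x ∈ shiftOf FX, (∀ i : ℕ, i ≤ w.length → f (fun j => x (i + j)) = τ (List.take i w)) ∧
      winF m w.length x = u with hQ
  set s : Word k → A × ((Fin (m + 1) → B) → Bool) :=
    fun w => (τ w, fun u => decide (Q w u)) with hs
  have hQs : ∀ w u, (s w).2 u = true ↔ Q w u := by
    intro w u; simp [hs]
  refine ⟨s, ?_, fun w => rfl⟩
  intro w
  refine ⟨⟨?_, ?_⟩, ?_⟩
  · -- nonemptiness
    have hchain := chainThrough_isChain hk w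
    have := hτ (chainThrough hk w) hchain
    rw [← hY] at this
    obtain ⟨x, hxX, hxF⟩ := this
    refine ⟨winF m w.length x, (hQs w _).mpr ⟨x, hxX, ?_, rfl⟩⟩
    intro i hi
    have := congrFun hxF i
    simp only at this
    rw [this, chainThrough_take hk w i hi]
  · -- output and goodness
    intro u hu
    obtain ⟨x, hxX, hxτ, hxu⟩ := (hQs w u).mp hu
    constructor
    · rw [← hxu, fOf_win m n hn f hf]
      have := hxτ w.length (le_refl _)
      rwa [List.take_length] at this
    · rw [← hxu]
      exact (mem_shiftOf_iff_good m FX hFm x).mp hxX w.length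
  · -- parent-child
    intro i u' hu'
    obtain ⟨x, hxX, hxτ, hxu⟩ := (hQs (w ++ [i]) u').mp hu'
    refine ⟨winF m w.length x, (hQs w _).mpr ⟨x, hxX, ?_, rfl⟩, ?_⟩
    · intro j hj
      have := hxτ j (by simp; omega)
      rwa [List.take_append_of_le_length hj] at this
    · intro j hjm
      simp only [winF]
      rw [← hxu]
      simp only [winF, List.length_append, List.length_singleton]
      congr 1
      omega

end MainLemmas

/-- If a one-sided shift space `Y` is a sofic shift, then its hom tree-shift `T_Y` is a
sofic tree-shift. -/
theorem stmt4 {k : ℕ} (hk : 2 ≤ k) {A : Type*} [Fintype A] (Y : Set (ℕ → A))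
    (hY : IsShift Y) (h : IsSofic Y) : IsSoficTree (homTree k Y) := by
  classical
  obtain ⟨B, hBfin, X, n, f, ⟨FX, hFXfin, hXdef⟩, hf, hYimg⟩ := h
  haveI : Fintype B := hBfin
  haveI : DecidableEq B := Classical.decEq B
  subst hXdef
  obtain ⟨L, hL⟩ : ∃ L, ∀ w ∈ FX, w.length ≤ L := by
    obtain ⟨L, hL⟩ := (hFXfin.image List.length).bddAbove
    exact ⟨L, fun w hw => hL (Set.mem_image_of_mem _ hw)⟩
  set m := max n L with hm
  have hn : n ≤ m + 1 := by omega
  have hFm : ∀ w ∈ FX, w.length ≤ m + 1 := fun w hw => by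
    have := hL w hw; omega
  have hk0 : 0 < k := by omega
  set e : A ≃ Fin (Fintype.card A) := Fintype.equivFin A with he
  refine ⟨Fin (Fintype.card A) × ((Fin (m + 1) → B) → Bool), by infer_instance,
    {s : Word k → Fin (Fintype.card A) × ((Fin (m + 1) → B) → Bool) | ∀ w,
      (fun b => CondZ m f FX (e.symm b.1, b.2)) (s w) ∧
      ∀ i : Fin k, (fun (_ : Fin k) b b' => CondS m (e.symm b.1, b.2) (e.symm b'.1, b'.2)) i
        (s w) (s (w ++ [i]))}, 0,
    fun v => e.symm (v []).1, ?_, ?_, ?_⟩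
  · exact isTreeSFT_local
      (fun b : Fin (Fintype.card A) × ((Fin (m + 1) → B) → Bool) =>
        CondZ m f FX (e.symm b.1, b.2))
      (fun (_ : Fin k) (b b' : Fin (Fintype.card A) × ((Fin (m + 1) → B) → Bool)) =>
        CondS m (e.symm b.1, b.2) (e.symm b'.1, b'.2))
  · intro u v huv
    show e.symm (u []).1 = e.symm (v []).1
    rw [huv [] (by simp)]
  · ext τ
    constructor
    · rintro ⟨s, hsT, rfl⟩
      intro c hc
      have hsT' : (fun w => (e.symm (s w).1, (s w).2)) ∈ TsetC m f FX k := by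
        intro w
        exact ⟨(hsT w).1, fun i => (hsT w).2 i⟩
      obtain ⟨x, hxX, hxF⟩ := forwardA m n hn hk0 f hf FX hFm _ hsT' c hc
      rw [← hYimg]
      refine ⟨x, hxX, ?_⟩
      funext d
      show f (fun j => x (d + j)) = e.symm ((s (c d ++ [])).1)
      rw [hxF d, List.append_nil]
    · intro hτ
      obtain ⟨s, hsT, hsτ⟩ := backwardB m n hn hk0 f hf FX hFm Y hYimg τ hτ
      refine ⟨fun w => (e (s w).1, (s w).2), ?_, ?_⟩
      · intro w
        constructor
        · show CondZ m f FX (e.symm (e (s w).1), (s w).2)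
          rw [Equiv.symm_apply_apply]
          exact (hsT w).1
        · intro i
          show CondS m (e.symm (e (s w).1), (s w).2)
            (e.symm (e (s (w ++ [i])).1), (s (w ++ [i])).2)
          rw [Equiv.symm_apply_apply, Equiv.symm_apply_apply]
          exact (hsT w).2 i
      · funext w
        show e.symm (e (s (w ++ [])).1) = τ w
        rw [Equiv.symm_apply_apply, List.append_nil, hsτ]

end TreeShiftPaper
end

section
/- Every uniform CPC-strongly irreducible tree-shift is strongly irreducible: if T is CPC USI, then T is SI. -/
/-!
Write `w = b z` with `|z| = N`. A position `w` at distance at least `N + 2` from `s(u)` forces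
every child of `b` out of `s(u)`; enlarging `s(u)` by the prefixes of `b`, labelled from a tree in
which `u` appears, makes `b` a boundary node, so CPC USI puts `v` at `b z`. When `|w| < N` the
distance condition forces `s(u) = ∅`: then `v` is placed at `q w` for a padding word `q` of length
`N - |w|`, and shifting by `q` brings it to `w`.
-/

namespace TreeShiftPaper

section

variable {k : ℕ} {A : Type*}

theorem IsTreeShift.shift_mem {T : Set (Word k → A)} (hT : IsTreeShift T) {t : Word k → A}
    (ht : t ∈ T) (s : Word k) : (fun x => t (s ++ x)) ∈ T := by
  obtain ⟨F, -, rfl⟩ := hT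
  rintro p hp ⟨s', hs'⟩
  exact ht p hp ⟨s ++ s', fun x hx => by rw [List.append_assoc]; exact hs' x hx⟩

theorem wordDist_append_append_le (b z z' : Word k) :
    wordDist (b ++ z) (b ++ z') ≤ z.length + z'.length := by
  have hbdd : BddAbove {m : ℕ | ∃ c : Word k, c <+: b ++ z ∧ c <+: b ++ z' ∧ c.length = m} :=
    ⟨(b ++ z).length, fun _ ⟨c, hc, _, hm⟩ => hm ▸ hc.length_le⟩
  have hb := le_csSup hbdd ⟨b, List.prefix_append _ _, List.prefix_append _ _, rfl⟩
  simp only [wordDist, List.length_append] at hb ⊢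
  omega

theorem PrefixClosed.nil_mem {S : Set (Word k)} (hS : PrefixClosed S) (hne : S.Nonempty) :
    [] ∈ S :=
  let ⟨x, hx⟩ := hne
  hS x hx [] x.nil_prefix

theorem PrefixClosed.union {S S' : Set (Word k)} (hS : PrefixClosed S) (hS' : PrefixClosed S') :
    PrefixClosed (S ∪ S') := by
  rintro x (hx | hx) p hp
  exacts [Or.inl (hS x hx p hp), Or.inr (hS' x hx p hp)]

theorem prefixClosed_setOf_prefix (b : Word k) : PrefixClosed {p | p <+: b} :=
  fun _ hx _ hp => hp.trans hx

theorem finite_setOf_prefix (b : Word k) : {p | p <+: b}.Finite := by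
  simpa only [List.mem_inits] using b.inits.finite_toSet

theorem mem_boundary_union_setOf_prefix {S : Set (Word k)} {b : Word k}
    (hb : ∀ i : Fin k, b ++ [i] ∉ S) : b ∈ boundary (S ∪ {p | p <+: b}) := by
  refine ⟨Or.inr b.prefix_refl, fun i hi => hi.elim (hb i) fun hpre => ?_⟩
  simpa using hpre.length_le

theorem AdmissiblePattern.exists_extend {T : Set (Word k → A)} {S : Set (Word k)}
    {u : Word k → A} (hu : AdmissiblePattern T S u) (S' : Set (Word k)) :
    ∃ u', AdmissiblePattern T (S ∪ S') u' ∧ ∀ x ∈ S, u' x = u x := by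
  obtain ⟨t, ht, s, hs⟩ := hu
  exact ⟨fun x => t (s ++ x), ⟨t, ht, s, fun _ _ => rfl⟩, hs⟩

theorem CPCSIWith.exists_glue {T : Set (Word k → A)} {P Su Sv : Set (Word k)}
    {u v : Word k → A} (hP : CPCSIWith T P) (hSuf : Su.Finite) (hSupc : PrefixClosed Su)
    (hSvf : Sv.Finite) (hSvpc : PrefixClosed Sv) (hu : AdmissiblePattern T Su u)
    (hv : AdmissiblePattern T Sv v) {b : Word k} (hb : ∀ i : Fin k, b ++ [i] ∉ Su)
    {z : Word k} (hz : z ∈ P) :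
    ∃ t ∈ T, (∀ x ∈ Su, t x = u x) ∧ ∀ y ∈ Sv, t (b ++ z ++ y) = v y := by
  obtain ⟨u', hu', hu'u⟩ := hu.exists_extend {p | p <+: b}
  obtain ⟨t, ht, htu, htv⟩ := hP _ Sv u' v (hSuf.union (finite_setOf_prefix b))
    (hSupc.union (prefixClosed_setOf_prefix b)) hSvf hSvpc hu' hv
  exact ⟨t, ht, fun x hx => (htu x (Or.inl hx)).trans (hu'u x hx),
    htv b (mem_boundary_union_setOf_prefix hb) z hz⟩

end

theorem stmt5_general {k : ℕ} (hk : 2 ≤ k) {A : Type*} (T : Set (Word k → A))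
    (hT : IsTreeShift T) (h : CPCUSI T) : SI T := by
  obtain ⟨N, hN⟩ := h
  refine ⟨N + 2, fun Su Sv u v hSuf hSupc hSvf hSvpc hu hv w hw => ?_⟩
  by_cases hlen : N ≤ w.length
  · obtain ⟨b, z, rfl, hz⟩ : ∃ b z : Word k, w = b ++ z ∧ z.length = N :=
      ⟨_, _, (w.take_append_drop (w.length - N)).symm, by simp only [List.length_drop]; omega⟩
    refine hN.exists_glue hSuf hSupc hSvf hSvpc hu hv (fun i hi => ?_) hz
    have hnear := wordDist_append_append_le b z [i]
    have hfar := hw _ hi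
    rw [List.length_singleton, hz] at hnear
    omega
  · have hSu : Su = ∅ := Set.not_nonempty_iff_eq_empty.mp fun hne => by
      have hfar := hw [] (hSupc.nil_mem hne)
      have hnear : wordDist w [] ≤ w.length := by simpa using wordDist_append_append_le [] w []
      omega
    subst hSu
    obtain ⟨q, hq⟩ : ∃ q : Word k, q.length = N - w.length :=
      ⟨List.replicate _ ⟨0, by omega⟩, List.length_replicate⟩
    obtain ⟨t, ht, -, htv⟩ := hN.exists_glue (b := []) hSuf hSupc hSvf hSvpc hu hv
      (fun _ => id) (z := q ++ w) (by simp only [Set.mem_ofPred_eq, List.length_append]; omega)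
    exact ⟨_, hT.shift_mem ht q, fun _ => False.elim, fun y hy => by simpa using htv y hy⟩

/-- Every uniform CPC-strongly irreducible tree-shift is strongly irreducible. -/
theorem stmt5 {k : ℕ} (hk : 2 ≤ k) {A : Type*} [Fintype A] (T : Set (Word k → A))
    (hT : IsTreeShift T) (h : CPCUSI T) : SI T :=
  stmt5_general hk T hT h

end TreeShiftPaper
end

section
/- Every uniform CPC-block gluing tree-shift is block gluing: if T is CPC UBG, then T is BG. -/
/-!
Uniform CPC gluing places a block below every node of depth exactly `n + N`. Applied once to a
tree realising `v`, it places `v` below every node of any prescribed depth `d ≥ N`. Applied again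
to glue `u` at the root onto that tree, with `d = |w| - (n + N)`, the copy of `v` below `w`
survives; hence `T` is block gluing with gap `2N`.
-/

namespace TreeShiftPaper

section

variable {k : ℕ} {A : Type*} {T : Set (Word k → A)}

theorem AdmissibleBlock.of_mem {t : Word k → A} (ht : t ∈ T) (n : ℕ) :
    AdmissibleBlock T n t :=
  ⟨t, ht, [], fun _ _ => rfl⟩

theorem CPCBGWith.exists_forall_length_eq_add {N n m : ℕ} {u v : Word k → A}
    (hT : CPCBGWith T {z : Word k | z.length = N})
    (hu : AdmissibleBlock T n u) (hv : AdmissibleBlock T m v) :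
    ∃ t ∈ T, (∀ z : Word k, z.length ≤ n → t z = u z) ∧
      ∀ w : Word k, w.length = n + N → ∀ y : Word k, y.length ≤ m → t (w ++ y) = v y := by
  obtain ⟨t, ht, hu', hv'⟩ := hT n m u v hu hv
  refine ⟨t, ht, hu', fun w hw y hy => ?_⟩
  rw [← List.take_append_drop n w]
  exact hv' _ (by simp; omega) _ (by simp; omega) y hy

theorem CPCBGWith.exists_forall_length_eq {N m d : ℕ} {v : Word k → A}
    (hT : CPCBGWith T {z : Word k | z.length = N}) (hv : AdmissibleBlock T m v) (hd : N ≤ d) :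
    ∃ t ∈ T, ∀ x : Word k, x.length = d → ∀ y : Word k, y.length ≤ m → t (x ++ y) = v y := by
  obtain ⟨t₀, ht₀, s, hs⟩ := hv
  obtain ⟨t, ht, -, hvt⟩ :=
    hT.exists_forall_length_eq_add (AdmissibleBlock.of_mem ht₀ (d - N)) ⟨t₀, ht₀, s, hs⟩
  exact ⟨t, ht, fun x hx => hvt x (by omega)⟩

theorem CPCBGWith.bg {N : ℕ} (hT : CPCBGWith T {z : Word k | z.length = N}) : BG T := by
  refine ⟨2 * N, fun n m u v hu hv w hw => ?_⟩
  set d := w.length - (n + N)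
  obtain ⟨t', ht', hvt'⟩ := hT.exists_forall_length_eq hv (show N ≤ d by omega)
  obtain ⟨t, ht, hut, ht't⟩ :=
    hT.exists_forall_length_eq_add hu (AdmissibleBlock.of_mem ht' (d + m))
  refine ⟨t, ht, hut, fun y hy => ?_⟩
  have hsplit : w ++ y = w.take (n + N) ++ (w.drop (n + N) ++ y) := by
    rw [← List.append_assoc, List.take_append_drop]
  rw [hsplit, ht't _ (by simp; omega) _ (by simp; omega)]
  exact hvt' _ List.length_drop y hy

end

theorem stmt6_general {k : ℕ} {A : Type*} (T : Set (Word k → A))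
    (h : CPCUBG T) : BG T := by
  obtain ⟨N, hN⟩ := h
  exact hN.bg

/-- Every uniform CPC-block gluing tree-shift is block gluing. -/
theorem stmt6 {k : ℕ} (hk : 2 ≤ k) {A : Type*} [Fintype A] (T : Set (Word k → A))
    (hT : IsTreeShift T) (h : CPCUBG T) : BG T :=
  stmt6_general T h

end TreeShiftPaper
end

section
/- Let X be a one-sided shift space and T_X its hom tree-shift. Then T_X is uniform CPC-strongly irreducible (CPC USI) if and only if T_X is uniform CPC-block gluing (CPC UBG). -/
/-!
Blocks are the patterns supported on `Δ_n`, whose boundary contains `Σ^n`, so CPC SI implies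
CPC BG for every tree-shift. Conversely, membership in a hom tree-shift is checked along single
chains, so trees can be grafted: for each boundary node `w` of `u`, block gluing of `Δ_{|w|}`
with a block containing `v` yields a tree `τ_w`, and replacing the subtree at `w` of a tree
realizing `u` by that of `τ_w` keeps every chain inside `X`.
-/

namespace TreeShiftPaper

section

variable {k : ℕ} {A : Type*}

section Chains

lemma IsShift.comp_add_mem {X : Set (ℕ → A)} (hX : IsShift X) {x : ℕ → A} (hx : x ∈ X)
    (j : ℕ) : (fun n => x (n + j)) ∈ X := by
  obtain ⟨F, rfl⟩ := hX
  intro w hw i hocc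
  exact hx w hw (i + j) fun l => by rw [add_right_comm]; exact hocc l

lemma IsChain.prefix_of_le {c : ℕ → Word k} (hc : IsChain c) {a b : ℕ} (h : a ≤ b) :
    c a <+: c b := by
  induction b, h using Nat.le_induction with
  | base => exact List.prefix_refl _
  | succ b _ ih =>
    obtain ⟨i, hi⟩ := hc.2 b
    exact hi ▸ ih.trans (List.prefix_append _ _)

lemma IsChain.prepend {c : ℕ → Word k} (hc : IsChain c) (s : Word k) :
    IsChain fun n => s.take n ++ c (n - s.length) := by
  refine ⟨by simp [hc.1], fun n => ?_⟩
  rcases lt_or_ge n s.length with h | h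
  · refine ⟨s[n], ?_⟩
    simp only [Nat.sub_eq_zero_of_le h.le, Nat.sub_eq_zero_of_le h, hc.1, List.append_nil]
    exact (List.take_concat_get' s n h).symm
  · obtain ⟨i, hi⟩ := hc.2 (n - s.length)
    refine ⟨i, ?_⟩
    dsimp only
    rw [Nat.sub_add_comm h, hi, List.take_of_length_le h,
      List.take_of_length_le (h.trans n.le_succ), List.append_assoc]

lemma IsShift.shift_mem_homTree {X : Set (ℕ → A)} (hX : IsShift X) {t : Word k → A}
    (ht : t ∈ homTree k X) (s : Word k) : (fun w => t (s ++ w)) ∈ homTree k X := by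
  intro c hc
  convert hX.comp_add_mem (ht _ (hc.prepend s)) s.length using 2 with n
  rw [List.take_of_length_le (Nat.le_add_left _ _), Nat.add_sub_cancel]

end Chains

section Graft

/-- `B` will be an antichain for the prefix order, so the choice of `w` does not matter. -/
noncomputable def graft (B : Set (Word k)) (t : Word k → A) (τ : Word k → Word k → A) :
    Word k → A :=
  open Classical in fun z => if h : ∃ w ∈ B, w <+: z then τ h.choose z else t z

variable {B : Set (Word k)} {t : Word k → A} {τ : Word k → Word k → A}

lemma graft_eq_of_prefix (hB : IsAntichain (· <+: ·) B) {w z : Word k}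
    (hw : w ∈ B) (hwz : w <+: z) : graft B t τ z = τ w z := by
  have h : ∃ w ∈ B, w <+: z := ⟨w, hw, hwz⟩
  obtain ⟨hB', hpre⟩ := h.choose_spec
  have heq : h.choose = w := (List.prefix_or_prefix_of_prefix hpre hwz).elim
    (hB.eq hB' hw) fun h' => (hB.eq hw hB' h').symm
  simp only [graft, dif_pos h, heq]

lemma graft_eq_of_not_prefix {z : Word k} (h : ∀ w ∈ B, ¬ w <+: z) : graft B t τ z = t z := by
  have h' : ¬ ∃ w ∈ B, w <+: z := fun ⟨w, hw, hwz⟩ => h w hw hwz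
  simp only [graft, dif_neg h']

lemma graft_eq_of_comparable (hB : IsAntichain (· <+: ·) B)
    (hagree : ∀ w ∈ B, ∀ z, z <+: w → τ w z = t z) {w z : Word k} (hw : w ∈ B)
    (hwz : w <+: z ∨ z <+: w) : graft B t τ z = τ w z := by
  rcases hwz with hwz | hzw
  · exact graft_eq_of_prefix hB hw hwz
  · by_cases h : ∃ w' ∈ B, w' <+: z
    · obtain ⟨w', hw', hw'z⟩ := h
      rw [graft_eq_of_prefix hB hw' hw'z, hB.eq hw' hw (hw'z.trans hzw)]
    · rw [graft_eq_of_not_prefix (by simpa using h), hagree w hw z hzw]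

lemma graft_mem_homTree {X : Set (ℕ → A)} (hB : IsAntichain (· <+: ·) B)
    (ht : t ∈ homTree k X) (hτ : ∀ w ∈ B, τ w ∈ homTree k X)
    (hagree : ∀ w ∈ B, ∀ z, z <+: w → τ w z = t z) : graft B t τ ∈ homTree k X := by
  intro c hc
  by_cases hmeet : ∃ n₀, ∃ w ∈ B, w <+: c n₀
  · obtain ⟨n₀, w, hw, hwc⟩ := hmeet
    have hpath : ∀ n, graft B t τ (c n) = τ w (c n) := fun n =>
      graft_eq_of_comparable hB hagree hw <| List.prefix_or_prefix_of_prefix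
        (hwc.trans (hc.prefix_of_le (le_max_left n₀ n))) (hc.prefix_of_le (le_max_right n₀ n))
    simpa only [hpath] using hτ w hw c hc
  · push Not at hmeet
    simpa only [graft_eq_of_not_prefix (hmeet _)] using ht c hc

end Graft

lemma boundary_eq_of_prefix {S : Set (Word k)} (hS : PrefixClosed S) {w z : Word k}
    (hw : w ∈ boundary S) (hz : z ∈ S) (hwz : w <+: z) : w = z := by
  obtain ⟨_ | ⟨i, d⟩, rfl⟩ := hwz
  · simp
  · exact absurd (hS _ hz (w ++ [i]) ⟨d, by simp⟩) (hw.2 i)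

lemma isAntichain_boundary {S : Set (Word k)} (hS : PrefixClosed S) :
    IsAntichain (· <+: ·) (boundary S) :=
  fun _ hw _ hw' hne hwz => hne (boundary_eq_of_prefix hS hw hw'.1 hwz)

lemma prefixClosed_setOf_length_le (n : ℕ) : PrefixClosed {z : Word k | z.length ≤ n} :=
  fun _ hw _ hv => hv.length_le.trans hw

lemma mem_boundary_setOf_length_le {n : ℕ} {w : Word k} (hw : w.length = n) :
    w ∈ boundary {z : Word k | z.length ≤ n} :=
  ⟨hw.le, fun i => by simp [hw]⟩

lemma CPCSIWith.cpcBGWith {T : Set (Word k → A)} {P : Set (Word k)} (h : CPCSIWith T P) :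
    CPCBGWith T P := by
  intro n m u v hu hv
  obtain ⟨t, ht, htu, htv⟩ := h _ _ u v (List.finite_length_le _ n)
    (prefixClosed_setOf_length_le n) (List.finite_length_le _ m)
    (prefixClosed_setOf_length_le m) hu hv
  exact ⟨t, ht, htu, fun w hw z hz y hy => htv w (mem_boundary_setOf_length_le hw) z hz y hy⟩

lemma IsShift.cpcSIWith_homTree {X : Set (ℕ → A)} (hX : IsShift X) {P : Set (Word k)}
    (h : CPCBGWith (homTree k X) P) : CPCSIWith (homTree k X) P := by
  intro Su Sv u v _ hSu hSv _ ⟨tu, htu, su, hu⟩ ⟨tv, htv, sv, hv⟩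
  obtain ⟨m, hm⟩ := (hSv.image List.length).bddAbove
  have ht₀ := hX.shift_mem_homTree htu su
  have hglue (w : Word k) := h w.length m (fun z => tu (su ++ z)) (fun y => tv (sv ++ y))
    ⟨_, ht₀, [], fun _ _ => rfl⟩ ⟨tv, htv, sv, fun _ _ => rfl⟩
  choose τ hτ hτu hτv using hglue
  have hB := isAntichain_boundary hSu
  refine ⟨graft (boundary Su) _ τ,
    graft_mem_homTree hB ht₀ (fun w _ => hτ w) fun w _ z hz => hτu w z hz.length_le,
    fun z hz => ?_, fun w hw z hz y hy => ?_⟩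
  · by_cases hzB : ∃ w ∈ boundary Su, w <+: z
    · obtain ⟨w, hw, hwz⟩ := hzB
      obtain rfl := boundary_eq_of_prefix hSu hw hz hwz
      rw [graft_eq_of_prefix hB hw hwz, hτu w w le_rfl, hu w hz]
    · rw [graft_eq_of_not_prefix (by simpa using hzB), hu z hz]
  · rw [graft_eq_of_prefix hB hw (List.prefix_append_of_prefix (List.prefix_append w z)),
      hτv w w rfl z hz y (hm (Set.mem_image_of_mem _ hy)), hv y hy]

end

theorem stmt9_general {k : ℕ} {A : Type*} (X : Set (ℕ → A))
    (hX : IsShift X) : CPCUSI (homTree k X) ↔ CPCUBG (homTree k X) :=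
  ⟨fun ⟨N, h⟩ => ⟨N, h.cpcBGWith⟩, fun ⟨N, h⟩ => ⟨N, hX.cpcSIWith_homTree h⟩⟩

/-- For a hom tree-shift `T_X`: uniform CPC-strong irreducibility is equivalent to
uniform CPC-block gluing. -/
theorem stmt9 {k : ℕ} (hk : 2 ≤ k) {A : Type*} [Fintype A] (X : Set (ℕ → A))
    (hX : IsShift X) : CPCUSI (homTree k X) ↔ CPCUBG (homTree k X) :=
  stmt9_general X hX

end TreeShiftPaper
end

section
/- Let X be a one-sided shift space and T_X its hom tree-shift. Then T_X is uniform CPC-block gluing (CPC UBG) if and only if T_X is CPC-block gluing (CPC BG). -/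
namespace TreeShiftPaper

/-- Retraction of the tree onto the shape where the uniform gap `\Sigma^{|p|}` is replaced
by the single word `p`. -/
def phiMap {k : ℕ} (n : ℕ) (p : Word k) (x : Word k) : Word k :=
  x.take n ++ p.take (x.length - n) ++ x.drop (n + p.length)

lemma phiMap_short {k : ℕ} (n : ℕ) (p : Word k) {x : Word k} (h : x.length ≤ n) :
    phiMap n p x = x := by
  have h1 : x.length - n = 0 := Nat.sub_eq_zero_of_le h
  simp [phiMap, h1, List.take_of_length_le h,
    List.drop_eq_nil_of_le (le_trans h (Nat.le_add_right n p.length))]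

lemma phiMap_glue {k : ℕ} (n : ℕ) (p : Word k) {w z y : Word k} (hw : w.length = n)
    (hz : z.length = p.length) :
    phiMap n p (w ++ z ++ y) = w ++ p ++ y := by
  unfold phiMap
  rw [List.append_assoc w z y]
  have hlen : (w ++ (z ++ y)).length = n + (p.length + y.length) := by
    simp [hw, hz]
  rw [List.take_left' hw, hlen]
  have h2 : n + (p.length + y.length) - n = p.length + y.length := by omega
  rw [h2, List.take_of_length_le (Nat.le_add_right _ _)]
  have h3 : (w ++ (z ++ y)).drop (n + p.length) = y := by
    rw [← List.drop_drop, List.drop_left' hw, ← hz, List.drop_left' rfl]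
  rw [h3]

lemma phiMap_step {k : ℕ} (n : ℕ) (p : Word k) (x : Word k) (a : Fin k) :
    ∃ b : Fin k, phiMap n p (x ++ [a]) = phiMap n p x ++ [b] := by
  rcases lt_or_ge x.length n with h | h
  · refine ⟨a, ?_⟩
    rw [phiMap_short n p (le_of_lt h), phiMap_short n p (by simp; omega)]
  rcases lt_or_ge x.length (n + p.length) with h2 | h2
  · have hj : x.length - n < p.length := by omega
    refine ⟨p.get ⟨x.length - n, hj⟩, ?_⟩
    unfold phiMap
    have hlen : (x ++ [a]).length = x.length + 1 := by simp
    rw [List.take_append_of_le_length h, hlen]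
    have h3 : x.length + 1 - n = (x.length - n) + 1 := by omega
    rw [h3, List.take_succ,
      List.drop_eq_nil_of_le (show (x ++ [a]).length ≤ n + p.length by simp; omega),
      List.drop_eq_nil_of_le (show x.length ≤ n + p.length by omega)]
    have h4 : p[x.length - n]? = some (p.get ⟨x.length - n, hj⟩) := by
      rw [List.getElem?_eq_getElem hj]; rfl
    rw [h4]
    simp
  · refine ⟨a, ?_⟩
    unfold phiMap
    have hn : n ≤ x.length := by omega
    have hlen : (x ++ [a]).length = x.length + 1 := by simp
    rw [List.take_append_of_le_length hn, hlen,
      List.take_of_length_le (l := p) (by omega),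
      List.take_of_length_le (l := p) (by omega),
      List.drop_append_of_le_length h2]
    simp

lemma phiMap_nil {k : ℕ} (n : ℕ) (p : Word k) : phiMap n p ([] : Word k) = [] := by
  simp [phiMap]

lemma isChain_phiMap {k : ℕ} (n : ℕ) (p : Word k) {c : ℕ → Word k} (hc : IsChain c) :
    IsChain (fun i => phiMap n p (c i)) := by
  constructor
  · show phiMap n p (c 0) = []
    rw [hc.1, phiMap_nil]
  · intro i
    obtain ⟨b, hb⟩ := hc.2 i
    obtain ⟨b', hb'⟩ := phiMap_step n p (c i) b
    refine ⟨b', ?_⟩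
    show phiMap n p (c (i + 1)) = phiMap n p (c i) ++ [b']
    rw [hb, hb']

lemma cpcbgwith_uniform {k : ℕ} {A : Type*} {X : Set (ℕ → A)} {P : Set (Word k)}
    {p : Word k} (hp : p ∈ P) (h : CPCBGWith (homTree k X) P) :
    CPCBGWith (homTree k X) {z : Word k | z.length = p.length} := by
  intro n m u v hu hv
  obtain ⟨t₁, ht₁, hroot, hglue⟩ := h n m u v hu hv
  refine ⟨fun x => t₁ (phiMap n p x), ?_, ?_, ?_⟩
  · intro c hc
    exact ht₁ (fun i => phiMap n p (c i)) (isChain_phiMap n p hc)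
  · intro z hz
    show t₁ (phiMap n p z) = u z
    rw [phiMap_short n p hz]
    exact hroot z hz
  · intro w hw z hz y hy
    show t₁ (phiMap n p (w ++ z ++ y)) = v y
    rw [phiMap_glue n p hw hz]
    exact hglue w hw p hp y hy

lemma IsCPC.nonempty' {k : ℕ} {P : Set (Word k)} (h : IsCPC P) : P.Nonempty := by
  by_contra hne
  rw [Set.not_nonempty_iff_eq_empty] at hne
  obtain ⟨x, hx, -⟩ := h.2.2 [] (by simp [hne])
  simp [hne] at hx

lemma isCPC_length_eq {k : ℕ} (hk : 2 ≤ k) (N : ℕ) :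
    IsCPC {z : Word k | z.length = N} := by
  refine ⟨List.finite_length_eq _ _, ?_, ?_⟩
  · intro x hx y hy hxy
    exact hxy.eq_of_length (hx.trans hy.symm)
  · intro w hw
    have hN : N ≤ w.length := by
      have hrep : (List.replicate N (⟨0, by omega⟩ : Fin k)).length = N := by simp
      exact hrep ▸ hw _ hrep
    exact ⟨w.take N, by simp [Nat.min_eq_left hN], List.take_prefix N w⟩

/-- For a hom tree-shift `T_X`: uniform CPC-block gluing is equivalent to CPC-block
gluing. -/
theorem stmt10 {k : ℕ} (hk : 2 ≤ k) {A : Type*} [Fintype A] (X : Set (ℕ → A))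
    (hX : IsShift X) : CPCUBG (homTree k X) ↔ CPCBG (homTree k X) := by
  constructor
  · rintro ⟨N, hN⟩
    exact ⟨_, isCPC_length_eq hk N, hN⟩
  · rintro ⟨P, hP, hPbg⟩
    obtain ⟨p, hp⟩ := hP.nonempty'
    exact ⟨p.length, cpcbgwith_uniform hp hPbg⟩

end TreeShiftPaper
end
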